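/- arXiv:1509.00837 — 2 statements merged into one kernel-verified Lean document; each statement's English description precedes it below -/
import Mathlib

section
/- For every δ ∈ (0,1) there exists δ* with 0 < δ* < δ such that for every subset Γ ⊆ ℝ^{2d} one has (Γ_{δ*})_{δ*} ⊆ Γ_δ and (ℝ^{2d} \ Γ_δ)_{δ*} ⊆ ℝ^{2d} \ Γ_{δ*}. -/
/-!
Since `⟨·⟩` is `1`-Lipschitz, the weights `⟨z⟩` and `⟨z₀⟩` of two points with
`|z − z₀| < ε⟨z₀⟩` differ by a factor at most `1 + ε`. Hence, by the triangle inequality, a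
`δ*`-neighbourhood of a `δ*`-neighbourhood lies in the `(2δ* + δ*²)`-neighbourhood, and a point
`w` with `|z − w| < δ*⟨w⟩` for some `z ∈ Γ_{δ*}` lies in `Γ_{2δ*/(1−δ*)}`. Both radii are at
most `δ` for `δ* = δ/3`.
-/

open Real

noncomputable section

/-- The Japanese bracket `⟨z⟩ = (1 + |z|²)^{1/2}`. -/
def jap {n : ℕ} (z : EuclideanSpace ℝ (Fin n)) : ℝ := Real.sqrt (1 + ‖z‖ ^ 2)

/-- The `δ`-neighborhood `Γ_δ = {z : |z − z₀| < δ⟨z₀⟩ for some z₀ ∈ Γ}`. -/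
def nbhd {n : ℕ} (Γ : Set (EuclideanSpace ℝ (Fin n))) (δ : ℝ) :
    Set (EuclideanSpace ℝ (Fin n)) :=
  {z | ∃ z₀ ∈ Γ, ‖z - z₀‖ < δ * jap z₀}

section

variable {n : ℕ} {Γ : Set (EuclideanSpace ℝ (Fin n))} {ε η δ : ℝ}

lemma jap_pos (z : EuclideanSpace ℝ (Fin n)) : 0 < jap z :=
  Real.sqrt_pos.mpr (by positivity)

lemma sq_jap (z : EuclideanSpace ℝ (Fin n)) : jap z ^ 2 = 1 + ‖z‖ ^ 2 :=
  Real.sq_sqrt (by positivity)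

lemma norm_le_jap (z : EuclideanSpace ℝ (Fin n)) : ‖z‖ ≤ jap z :=
  (Real.le_sqrt (norm_nonneg z) (by positivity)).mpr (by linarith)

lemma jap_le_jap_add_norm_sub (a b : EuclideanSpace ℝ (Fin n)) :
    jap a ≤ jap b + ‖a - b‖ := by
  have hab : ‖a‖ ≤ ‖b‖ + ‖a - b‖ := norm_le_norm_add_norm_sub' a b
  refine Real.sqrt_le_iff.mpr ⟨by positivity [jap_pos b], ?_⟩
  nlinarith [sq_jap b, norm_le_jap b, norm_nonneg a, norm_nonneg b, norm_nonneg (a - b)]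

lemma pos_of_norm_sub_lt_mul_jap {z w : EuclideanSpace ℝ (Fin n)}
    (h : ‖z - w‖ < η * jap w) : 0 < η :=
  pos_of_mul_pos_left ((norm_nonneg _).trans_lt h) (jap_pos w).le

lemma nbhd_nbhd_subset (h : ε + η + η * ε ≤ δ) : nbhd (nbhd Γ ε) η ⊆ nbhd Γ δ := by
  rintro z ⟨z₁, ⟨z₀, hz₀, hz₁z₀⟩, hzz₁⟩
  refine ⟨z₀, hz₀, ?_⟩
  have hη := pos_of_norm_sub_lt_mul_jap hzz₁
  have hjap : jap z₁ ≤ (1 + ε) * jap z₀ := by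
    linarith [jap_le_jap_add_norm_sub z₁ z₀]
  calc ‖z - z₀‖ ≤ ‖z - z₁‖ + ‖z₁ - z₀‖ := norm_sub_le_norm_sub_add_norm_sub z z₁ z₀
    _ < η * ((1 + ε) * jap z₀) + ε * jap z₀ := add_lt_add (hzz₁.trans_le (by gcongr)) hz₁z₀
    _ = (ε + η + η * ε) * jap z₀ := by ring
    _ ≤ δ * jap z₀ := by gcongr; exact (jap_pos z₀).le

lemma nbhd_compl_nbhd_subset_compl (hη : η < 1) (h : ε + η ≤ δ * (1 - η)) :
    nbhd (nbhd Γ δ)ᶜ η ⊆ (nbhd Γ ε)ᶜ := by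
  rintro z ⟨w, hw, hzw⟩ ⟨z₀, hz₀, hzz₀⟩
  refine hw ⟨z₀, hz₀, ?_⟩
  have hη₀ := pos_of_norm_sub_lt_mul_jap hzw
  have hj₀ := jap_pos z₀
  have hwz₀ : ‖w - z₀‖ < η * (jap z₀ + ‖w - z₀‖) + ε * jap z₀ :=
    calc ‖w - z₀‖ ≤ ‖z - w‖ + ‖z - z₀‖ := by
          simpa only [norm_sub_rev w z] using norm_sub_le_norm_sub_add_norm_sub w z z₀
      _ < η * jap w + ε * jap z₀ := add_lt_add hzw hzz₀
      _ ≤ η * (jap z₀ + ‖w - z₀‖) + ε * jap z₀ := by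
        gcongr; exact jap_le_jap_add_norm_sub w z₀
  have hscaled : (1 - η) * ‖w - z₀‖ < (1 - η) * (δ * jap z₀) := by nlinarith
  exact lt_of_mul_lt_mul_left hscaled (by linarith)

end

theorem statement5 (d : ℕ) (δ : ℝ) (hδ0 : 0 < δ) (hδ1 : δ < 1) :
    ∃ δs : ℝ, 0 < δs ∧ δs < δ ∧
      ∀ Γ : Set (EuclideanSpace ℝ (Fin (2 * d))),
        nbhd (nbhd Γ δs) δs ⊆ nbhd Γ δ ∧
        nbhd ((nbhd Γ δ)ᶜ) δs ⊆ (nbhd Γ δs)ᶜ := by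
  refine ⟨δ / 3, by linarith, by linarith, fun Γ => ⟨?_, ?_⟩⟩
  · exact nbhd_nbhd_subset (by nlinarith)
  · exact nbhd_compl_nbhd_subset_compl (by linarith) (by nlinarith)
end
end

section
/- Let χ : ℝ^{2d} → ℝ^{2d} be a bi-Lipschitz bijection and let k : ℝ^{2d} × ℝ^{2d} → ℂ be measurable and satisfy, for every s ≥ 0, |k(w,z)| ≤ C_s ⟨z − χ(w)⟩^{-s} for all w, z ∈ ℝ^{2d}. Let s₀ ≥ 0 and let μ : ℝ^{2d} → (0,∞) be v_{s₀}-moderate, i.e. μ(z + w) ≤ C v_{s₀}(z) μ(w) for all z, w. Then for every 1 ≤ p ≤ ∞ the integral operator A F(z) = ∫_{ℝ^{2d}} k(w,z) F(w) dw is bounded from the weighted space L^p_{μ∘χ}(ℝ^{2d}) to L^p_μ(ℝ^{2d}): there is a constant C' such that ‖μ · AF‖_{L^p(ℝ^{2d})} ≤ C' ‖(μ∘χ) · F‖_{L^p(ℝ^{2d})} for all measurable F with (μ∘χ)F ∈ L^p. -/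
/-!
STATEMENT 10: weighted Schur-type boundedness: if a kernel `k` decays along the graph
of a bi-Lipschitz bijection `χ` and `μ` is a `v_{s₀}`-moderate weight, then the integral
operator `A F(z) = ∫ k(w,z) F(w) dw` is bounded from `L^p_{μ∘χ}(ℝ^{2d})` to
`L^p_μ(ℝ^{2d})` for every `1 ≤ p ≤ ∞`.
-/

open Real MeasureTheory
open scoped ENNReal NNReal

noncomputable section

noncomputable def Np {α : Type*} [MeasurableSpace α] (p : ℝ≥0∞) (h : α → ℝ≥0∞)
    (μ : Measure α) : ℝ≥0∞ :=
  if p = ∞ then essSup h μ else (∫⁻ a, h a ^ p.toReal ∂μ) ^ (1 / p.toReal)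

lemma eLpNorm_eq_Np {α E : Type*} [MeasurableSpace α] [NormedAddCommGroup E]
    {p : ℝ≥0∞} (hp : 1 ≤ p) (f : α → E) (μ : Measure α) :
    eLpNorm f p μ = Np p (fun a => (‖f a‖₊ : ℝ≥0∞)) μ := by
  rcases eq_or_ne p ∞ with h | h
  · simp [Np, h, eLpNorm_exponent_top, eLpNormEssSup]
    rfl
  · have hp0 : p ≠ 0 := by rintro rfl; simp at hp
    rw [eLpNorm_eq_lintegral_rpow_enorm_toReal hp0 h, Np, if_neg h]
    rfl

lemma Np_mono {α : Type*} [MeasurableSpace α] {μ : Measure α} (p : ℝ≥0∞) {h₁ h₂ : α → ℝ≥0∞}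
    (h : ∀ a, h₁ a ≤ h₂ a) : Np p h₁ μ ≤ Np p h₂ μ := by
  unfold Np
  split
  · exact essSup_mono_ae (Filter.Eventually.of_forall h)
  · exact ENNReal.rpow_le_rpow
      (lintegral_mono fun a => ENNReal.rpow_le_rpow (h a) ENNReal.toReal_nonneg)
      (by positivity)

lemma schur_bound {α β : Type*} [MeasurableSpace α] [MeasurableSpace β]
    {μa : Measure α} {μb : Measure β} [SFinite μa] [SFinite μb]
    {G : α × β → ℝ≥0∞} (hG : Measurable G)
    {g : α → ℝ≥0∞} (hg : AEMeasurable g μa)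
    {M : ℝ≥0∞} (hM0 : M ≠ 0) (hMt : M ≠ ∞)
    (hrow : ∀ z, ∫⁻ w, G (w, z) ∂μa ≤ M)
    (hcol : ∀ w, ∫⁻ z, G (w, z) ∂μb ≤ M)
    {p : ℝ≥0∞} (hp : 1 ≤ p) :
    Np p (fun z => ∫⁻ w, G (w, z) * g w ∂μa) μb ≤ M * Np p g μa := by
  have hGz : ∀ z, Measurable fun w => G (w, z) := fun z =>
    hG.comp (measurable_id.prodMk measurable_const)
  have hGw : ∀ w, Measurable fun z => G (w, z) := fun w =>
    hG.comp (measurable_const.prodMk measurable_id)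
  -- Tonelli computation used twice
  have hswap : ∀ (g' : α → ℝ≥0∞), AEMeasurable g' μa →
      ∫⁻ z, ∫⁻ w, G (w, z) * g' w ∂μa ∂μb = ∫⁻ w, (∫⁻ z, G (w, z) ∂μb) * g' w ∂μa := by
    intro g' hg'
    rw [lintegral_lintegral_swap]
    · exact lintegral_congr fun w => lintegral_mul_const (g' w) (hGw w)
    · exact ((hG.comp measurable_swap).aemeasurable).mul
        (hg'.comp_quasiMeasurePreserving Measure.quasiMeasurePreserving_snd)
  rcases eq_or_ne p ∞ with hpt | hpt
  · subst hpt
    simp only [Np, if_pos rfl]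
    refine essSup_le_of_ae_le _ (Filter.Eventually.of_forall fun z => ?_)
    calc ∫⁻ w, G (w, z) * g w ∂μa
        ≤ ∫⁻ w, G (w, z) * essSup g μa ∂μa := by
          refine lintegral_mono_ae ((ENNReal.ae_le_essSup g).mono fun w hw => ?_)
          exact mul_le_mul_right hw _
      _ = (∫⁻ w, G (w, z) ∂μa) * essSup g μa := lintegral_mul_const _ (hGz z)
      _ ≤ M * essSup g μa := mul_le_mul_left (hrow z) _
  · have hp0 : p ≠ 0 := by rintro rfl; simp at hp
    simp only [Np, if_neg hpt]
    set pt := p.toReal with hptdef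
    have hpt0 : 0 < pt := ENNReal.toReal_pos hp0 hpt
    have hpt1 : 1 ≤ pt := by
      have := ENNReal.toReal_mono hpt hp
      simpa using this
    rcases eq_or_lt_of_le hpt1 with h1 | h1
    · -- p = 1
      rw [← h1]
      simp only [ENNReal.rpow_one, one_div_one]
      calc ∫⁻ z, ∫⁻ w, G (w, z) * g w ∂μa ∂μb
          = ∫⁻ w, (∫⁻ z, G (w, z) ∂μb) * g w ∂μa := hswap g hg
        _ ≤ ∫⁻ w, M * g w ∂μa := lintegral_mono fun w => mul_le_mul_left (hcol w) _
        _ = M * ∫⁻ w, g w ∂μa := lintegral_const_mul' _ _ hMt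
    · -- 1 < pt
      set qt := pt.conjExponent with hqtdef
      have hpq : pt.HolderConjugate qt := Real.HolderConjugate.conjExponent h1
      have hq0 : 0 < qt := hpq.symm.pos
      have hinv : pt⁻¹ + qt⁻¹ = 1 := hpq.inv_add_inv_eq_one
      have key : ∀ z, (∫⁻ w, G (w, z) * g w ∂μa) ^ pt ≤
          M ^ (pt / qt) * ∫⁻ w, G (w, z) * g w ^ pt ∂μa := by
        intro z
        have split : (fun w => G (w, z) * g w)
            = fun w => (G (w, z) ^ pt⁻¹ * g w) * G (w, z) ^ qt⁻¹ := by
          funext w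
          rw [mul_right_comm, ← ENNReal.rpow_add_of_nonneg _ _ (by positivity) (by positivity),
            hinv, ENNReal.rpow_one]
        have holder :
            ∫⁻ w, (G (w, z) ^ pt⁻¹ * g w) * G (w, z) ^ qt⁻¹ ∂μa ≤
              (∫⁻ w, (G (w, z) ^ pt⁻¹ * g w) ^ pt ∂μa) ^ (1 / pt) *
                (∫⁻ w, (G (w, z) ^ qt⁻¹) ^ qt ∂μa) ^ (1 / qt) :=
          ENNReal.lintegral_mul_le_Lp_mul_Lq μa hpq
            (((hGz z).pow_const _).aemeasurable.mul hg)
            ((hGz z).pow_const _).aemeasurable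
        have e2 : ∀ w, (G (w, z) ^ pt⁻¹ * g w) ^ pt = G (w, z) * g w ^ pt := by
          intro w
          rw [ENNReal.mul_rpow_of_nonneg _ _ hpt0.le, ← ENNReal.rpow_mul,
            inv_mul_cancel₀ hpt0.ne', ENNReal.rpow_one]
        have e3 : ∀ w, (G (w, z) ^ qt⁻¹) ^ qt = G (w, z) := by
          intro w
          rw [← ENNReal.rpow_mul, inv_mul_cancel₀ hq0.ne', ENNReal.rpow_one]
        have step : ∫⁻ w, G (w, z) * g w ∂μa ≤
            (∫⁻ w, G (w, z) * g w ^ pt ∂μa) ^ (1 / pt) * M ^ (1 / qt) := by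
          calc ∫⁻ w, G (w, z) * g w ∂μa
              = ∫⁻ w, (G (w, z) ^ pt⁻¹ * g w) * G (w, z) ^ qt⁻¹ ∂μa := by rw [split]
            _ ≤ (∫⁻ w, (G (w, z) ^ pt⁻¹ * g w) ^ pt ∂μa) ^ (1 / pt) *
                (∫⁻ w, (G (w, z) ^ qt⁻¹) ^ qt ∂μa) ^ (1 / qt) := holder
            _ = (∫⁻ w, G (w, z) * g w ^ pt ∂μa) ^ (1 / pt) *
                (∫⁻ w, G (w, z) ∂μa) ^ (1 / qt) := by
                simp_rw [e2, e3]
            _ ≤ (∫⁻ w, G (w, z) * g w ^ pt ∂μa) ^ (1 / pt) * M ^ (1 / qt) :=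
                mul_le_mul_right (ENNReal.rpow_le_rpow (hrow z) (by positivity)) _
        calc (∫⁻ w, G (w, z) * g w ∂μa) ^ pt
            ≤ ((∫⁻ w, G (w, z) * g w ^ pt ∂μa) ^ (1 / pt) * M ^ (1 / qt)) ^ pt :=
              ENNReal.rpow_le_rpow step hpt0.le
          _ = M ^ (pt / qt) * ∫⁻ w, G (w, z) * g w ^ pt ∂μa := by
              rw [ENNReal.mul_rpow_of_nonneg _ _ hpt0.le, ← ENNReal.rpow_mul,
                ← ENNReal.rpow_mul, one_div, inv_mul_cancel₀ hpt0.ne', ENNReal.rpow_one,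
                mul_comm]
              congr 2
              field_simp
          -- (1/qt) * pt = pt/qt
      have main : ∫⁻ z, (∫⁻ w, G (w, z) * g w ∂μa) ^ pt ∂μb ≤
          M ^ (pt / qt) * (M * ∫⁻ w, g w ^ pt ∂μa) := by
        calc ∫⁻ z, (∫⁻ w, G (w, z) * g w ∂μa) ^ pt ∂μb
            ≤ ∫⁻ z, M ^ (pt / qt) * ∫⁻ w, G (w, z) * g w ^ pt ∂μa ∂μb :=
              lintegral_mono key
          _ = M ^ (pt / qt) * ∫⁻ z, ∫⁻ w, G (w, z) * g w ^ pt ∂μa ∂μb :=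
              lintegral_const_mul' _ _ (ENNReal.rpow_ne_top_of_nonneg (by positivity) hMt)
          _ = M ^ (pt / qt) * ∫⁻ w, (∫⁻ z, G (w, z) ∂μb) * g w ^ pt ∂μa := by
              rw [hswap _ (hg.pow_const pt)]
          _ ≤ M ^ (pt / qt) * ∫⁻ w, M * g w ^ pt ∂μa := by
              exact mul_le_mul_right (lintegral_mono fun w => mul_le_mul_left (hcol w) _) _
          _ = M ^ (pt / qt) * (M * ∫⁻ w, g w ^ pt ∂μa) := by
              rw [lintegral_const_mul' _ _ hMt]
      calc (∫⁻ z, (∫⁻ w, G (w, z) * g w ∂μa) ^ pt ∂μb) ^ (1 / pt)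
          ≤ (M ^ (pt / qt) * (M * ∫⁻ w, g w ^ pt ∂μa)) ^ (1 / pt) :=
            ENNReal.rpow_le_rpow main (by positivity)
        _ = M * (∫⁻ w, g w ^ pt ∂μa) ^ (1 / pt) := by
            have he : (pt / qt + 1) * (1 / pt) = 1 := by
              have h2 : (pt / qt + 1) * (1 / pt) = qt⁻¹ + pt⁻¹ := by
                field_simp
              rw [h2, add_comm, hinv]
            have e4 : M ^ (pt / qt) * (M * (∫⁻ w, g w ^ pt ∂μa))
                = M ^ (pt / qt + 1) * (∫⁻ w, g w ^ pt ∂μa) := by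
              rw [ENNReal.rpow_add _ _ hM0 hMt, ENNReal.rpow_one, mul_assoc]
            rw [e4, ENNReal.mul_rpow_of_nonneg _ _ (by positivity), ← ENNReal.rpow_mul,
              he, ENNReal.rpow_one]



lemma lintegral_comp_neg_euclidean {n : ℕ} (f : EuclideanSpace ℝ (Fin n) → ℝ≥0∞)
    (hf : Measurable f) : ∫⁻ x, f (-x) = ∫⁻ x, f x := by
  rw [← lintegral_map hf measurable_neg, Measure.map_neg_eq_self]


theorem statement10 (d : ℕ)
    (χ ψ : EuclideanSpace ℝ (Fin (2 * d)) → EuclideanSpace ℝ (Fin (2 * d)))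
    (K K' : NNReal) (hχ : LipschitzWith K χ) (hψ : LipschitzWith K' ψ)
    (hleft : Function.LeftInverse ψ χ) (hright : Function.RightInverse ψ χ)
    (k : EuclideanSpace ℝ (Fin (2 * d)) × EuclideanSpace ℝ (Fin (2 * d)) → ℂ)
    (hkm : Measurable k)
    (C : ℝ → ℝ)
    (hk : ∀ s, 0 ≤ s → ∀ w z, ‖k (w, z)‖ ≤ C s * jap (z - χ w) ^ (-s))
    (s₀ : ℝ) (hs₀ : 0 ≤ s₀)
    (μ : EuclideanSpace ℝ (Fin (2 * d)) → ℝ)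
    (hμm : Measurable μ) (hμpos : ∀ z, 0 < μ z)
    (Cμ : ℝ) (hmod : ∀ z w, μ (z + w) ≤ Cμ * jap z ^ s₀ * μ w)
    (p : ENNReal) (hp : 1 ≤ p) :
    ∃ C' : ℝ, 0 ≤ C' ∧
      ∀ F : EuclideanSpace ℝ (Fin (2 * d)) → ℂ,
        AEStronglyMeasurable F volume →
        eLpNorm (fun w => μ (χ w) * ‖F w‖) p volume < ⊤ →
        eLpNorm (fun z => μ z * ‖∫ w, k (w, z) * F w‖) p volume ≤
          ENNReal.ofReal C' * eLpNorm (fun w => μ (χ w) * ‖F w‖) p volume := by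
  set t : ℝ := 2 * d + 1 with hts
  have ht0 : (0:ℝ) < t := by positivity
  set s : ℝ := s₀ + t with hsdef
  have hs : 0 ≤ s := add_nonneg hs₀ ht0.le
  -- jap facts
  have japc : Continuous (jap (n := 2*d)) := by
    unfold jap
    exact Real.continuous_sqrt.comp (continuous_const.add (continuous_norm.pow 2))
  have japm : Measurable (jap (n := 2*d)) := japc.measurable
  have jappos : ∀ z : EuclideanSpace ℝ (Fin (2*d)), 0 < jap z := fun z => by
    unfold jap; positivity
  -- constants
  have hCs : 0 ≤ C s := by
    have h := hk s hs 0 0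
    have h2 : (0:ℝ) < jap ((0:EuclideanSpace ℝ (Fin (2*d))) - χ 0) ^ (-s) :=
      Real.rpow_pos_of_pos (jappos _) _
    nlinarith [norm_nonneg (k (0, 0))]
  have hCμ : 0 ≤ Cμ := by
    have h := hmod 0 0
    rw [add_zero] at h
    have h2 : (0:ℝ) < jap (0 : EuclideanSpace ℝ (Fin (2*d))) ^ s₀ :=
      Real.rpow_pos_of_pos (jappos _) _
    nlinarith [hμpos (0 : EuclideanSpace ℝ (Fin (2*d))), mul_pos h2 (hμpos (0 : EuclideanSpace ℝ (Fin (2*d))))]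
  set m : ℝ := max 1 (K' : ℝ) with hm
  have hm1 : (1:ℝ) ≤ m := le_max_left _ _
  have hm0 : (0:ℝ) < m := lt_of_lt_of_le one_pos hm1
  have hmt1 : (1:ℝ) ≤ m ^ t := by
    calc (1:ℝ) = 1 ^ t := (Real.one_rpow t).symm
      _ ≤ m ^ t := Real.rpow_le_rpow zero_le_one hm1 ht0.le
  have hmt0 : (0:ℝ) < m ^ t := lt_of_lt_of_le one_pos hmt1
  set B : ℝ := (Cμ * C s + 1) * m ^ t with hB
  have hB1 : (1:ℝ) ≤ B := by nlinarith [hmt1, mul_nonneg hCμ hCs]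
  have hB0 : (0:ℝ) < B := lt_of_lt_of_le one_pos hB1
  -- key kernel estimate
  have key : ∀ w z, μ z * ‖k (w, z)‖ ≤ B * jap (z - χ w) ^ (-t) * μ (χ w) := by
    intro w z
    have h1 : μ z ≤ Cμ * jap (z - χ w) ^ s₀ * μ (χ w) := by
      have h := hmod (z - χ w) (χ w)
      rwa [sub_add_cancel] at h
    have h2 : ‖k (w, z)‖ ≤ C s * jap (z - χ w) ^ (-s) := hk s hs w z
    have ja := jappos (z - χ w)
    have step : μ z * ‖k (w, z)‖
        ≤ (Cμ * jap (z - χ w) ^ s₀ * μ (χ w)) * (C s * jap (z - χ w) ^ (-s)) := by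
      apply mul_le_mul h1 h2 (norm_nonneg _)
      have h3 := (hμpos (χ w)).le
      have h4 : (0:ℝ) ≤ jap (z - χ w) ^ s₀ := (Real.rpow_pos_of_pos ja _).le
      positivity
    refine step.trans ?_
    have e : (Cμ * jap (z - χ w) ^ s₀ * μ (χ w)) * (C s * jap (z - χ w) ^ (-s))
        = (Cμ * C s) * jap (z - χ w) ^ (-t) * μ (χ w) := by
      rw [show (-t) = s₀ + (-s) by rw [hsdef]; ring, Real.rpow_add ja]
      ring
    rw [e]
    have hle : Cμ * C s ≤ B := by nlinarith [hmt1, mul_nonneg hCμ hCs]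
    have jrp : (0:ℝ) ≤ jap (z - χ w) ^ (-t) := (Real.rpow_pos_of_pos ja _).le
    exact mul_le_mul_of_nonneg_right (mul_le_mul_of_nonneg_right hle jrp) (hμpos (χ w)).le
  -- row comparison via Lipschitz inverse
  have rowjap : ∀ z w, jap (z - χ w) ^ (-t) ≤ m ^ t * jap (ψ z - w) ^ (-t) := by
    intro z w
    have hnorm : ‖ψ z - w‖ ≤ m * ‖z - χ w‖ := by
      have h1 : ‖ψ z - w‖ = ‖ψ z - ψ (χ w)‖ := by rw [hleft w]
      rw [h1]
      calc ‖ψ z - ψ (χ w)‖ = dist (ψ z) (ψ (χ w)) := (dist_eq_norm _ _).symm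
        _ ≤ K' * dist z (χ w) := hψ.dist_le_mul _ _
        _ ≤ m * ‖z - χ w‖ := by
            rw [dist_eq_norm]
            exact mul_le_mul_of_nonneg_right (le_max_right 1 (K':ℝ)) (norm_nonneg _)
    have hj : jap (ψ z - w) ≤ m * jap (z - χ w) := by
      unfold jap
      have h1 : 1 + ‖ψ z - w‖^2 ≤ m^2 * (1 + ‖z - χ w‖^2) := by
        nlinarith [norm_nonneg (ψ z - w), norm_nonneg (z - χ w), hm1]
      calc Real.sqrt (1 + ‖ψ z - w‖^2) ≤ Real.sqrt (m^2 * (1 + ‖z - χ w‖^2)) :=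
            Real.sqrt_le_sqrt h1
        _ = m * Real.sqrt (1 + ‖z - χ w‖^2) := by
            rw [Real.sqrt_mul (by positivity), Real.sqrt_sq hm0.le]
    have hdiv : jap (ψ z - w) / m ≤ jap (z - χ w) := by
      rw [div_le_iff₀ hm0]
      linarith [hj]
    have hstep : jap (z - χ w) ^ (-t) ≤ (jap (ψ z - w) / m) ^ (-t) :=
      Real.rpow_le_rpow_of_nonpos (div_pos (jappos _) hm0) hdiv (by linarith)
    calc jap (z - χ w) ^ (-t) ≤ (jap (ψ z - w) / m) ^ (-t) := hstep
      _ = m ^ t * jap (ψ z - w) ^ (-t) := by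
          rw [Real.div_rpow (jappos _).le hm0.le, Real.rpow_neg hm0.le, div_eq_mul_inv, inv_inv, mul_comm]
  -- the base integrable profile
  set hb : EuclideanSpace ℝ (Fin (2*d)) → ℝ≥0∞ := fun u => ENNReal.ofReal (jap u ^ (-t))
    with hhb
  have hbm : Measurable hb := ENNReal.measurable_ofReal.comp (japm.pow_const _)
  set I : ℝ≥0∞ := ∫⁻ u, hb u with hIdef
  have hIlt : I < ⊤ := by
    have hint : Integrable
        (fun u : EuclideanSpace ℝ (Fin (2*d)) => (1 + ‖u‖^2) ^ (-t/2)) volume := by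
      apply integrable_rpow_neg_one_add_norm_sq
      simp only [finrank_euclideanSpace, Fintype.card_fin, hts]
      push_cast
      linarith
    have heq : ∀ u : EuclideanSpace ℝ (Fin (2*d)), jap u ^ (-t) = (1 + ‖u‖^2) ^ (-t/2) := by
      intro u
      unfold jap
      rw [Real.sqrt_eq_rpow, ← Real.rpow_mul (by positivity)]
      congr 1
      ring
    calc I = ∫⁻ u, ENNReal.ofReal ((1 + ‖u‖^2) ^ (-t/2)) := by
          rw [hIdef]
          exact lintegral_congr fun u => by simp only [hhb]; rw [heq u]
      _ ≤ ∫⁻ u, (‖(1 + ‖u‖^2) ^ (-t/2)‖₊ : ℝ≥0∞) := lintegral_ofReal_le_lintegral_enorm _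
      _ < ⊤ := hint.2
  -- the dominating kernel
  set G : (EuclideanSpace ℝ (Fin (2*d)) × EuclideanSpace ℝ (Fin (2*d))) → ℝ≥0∞ :=
    fun q => ENNReal.ofReal (B * jap (q.2 - χ q.1) ^ (-t)) with hGdef
  have hGm : Measurable G := by
    apply ENNReal.measurable_ofReal.comp
    exact ((japm.comp (measurable_snd.sub (hχ.continuous.measurable.comp
      measurable_fst))).pow_const _).const_mul B
  have colB : ∀ w, ∫⁻ z, G (w, z) = ENNReal.ofReal B * I := by
    intro w
    have e : ∀ z, G (w, z) = ENNReal.ofReal B * hb (z - χ w) := by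
      intro z
      simp only [hGdef, hhb]
      rw [ENNReal.ofReal_mul hB0.le]
    calc ∫⁻ z, G (w, z) = ∫⁻ z, ENNReal.ofReal B * hb (z - χ w) := lintegral_congr e
      _ = ENNReal.ofReal B * ∫⁻ z, hb (z - χ w) :=
          lintegral_const_mul' _ _ ENNReal.ofReal_ne_top
      _ = ENNReal.ofReal B * I := by
          rw [hIdef]
          congr 1
          have e2 : ∀ z : EuclideanSpace ℝ (Fin (2*d)), hb (z - χ w) = hb (z + (-χ w)) :=
            fun z => by rw [sub_eq_add_neg]
          rw [lintegral_congr e2, lintegral_add_right_eq_self hb (-χ w)]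
  have rowB : ∀ z, ∫⁻ w, G (w, z) ≤ ENNReal.ofReal B * (ENNReal.ofReal (m ^ t) * I) := by
    intro z
    have step1 : ∀ w, G (w, z)
        ≤ ENNReal.ofReal B * (ENNReal.ofReal (m ^ t) * hb (ψ z - w)) := by
      intro w
      simp only [hGdef, hhb]
      rw [← ENNReal.ofReal_mul hmt0.le, ← ENNReal.ofReal_mul hB0.le]
      exact ENNReal.ofReal_le_ofReal (mul_le_mul_of_nonneg_left (rowjap z w) hB0.le)
    calc ∫⁻ w, G (w, z)
        ≤ ∫⁻ w, ENNReal.ofReal B * (ENNReal.ofReal (m ^ t) * hb (ψ z - w)) :=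
          lintegral_mono step1
      _ = ENNReal.ofReal B * (ENNReal.ofReal (m ^ t) * ∫⁻ w, hb (ψ z - w)) := by
          rw [lintegral_const_mul' _ _ ENNReal.ofReal_ne_top]
          congr 1
          rw [lintegral_const_mul' _ _ ENNReal.ofReal_ne_top]
      _ = ENNReal.ofReal B * (ENNReal.ofReal (m ^ t) * I) := by
          congr 1
          congr 1
          have e1 : ∀ w : EuclideanSpace ℝ (Fin (2*d)),
              hb (ψ z - w) = (fun u => hb (ψ z + u)) (-w) := fun w => by
            simp [sub_eq_add_neg]
          rw [lintegral_congr e1,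
            lintegral_comp_neg_euclidean (fun u => hb (ψ z + u))
              (hbm.comp (measurable_const.add measurable_id)),
            lintegral_add_left_eq_self hb (ψ z), hIdef]
  -- the Schur constant
  set M : ℝ≥0∞ := ENNReal.ofReal B * (ENNReal.ofReal (m ^ t) * (I + 1)) with hM
  have hM0 : M ≠ 0 := by
    rw [hM]
    apply mul_ne_zero (ENNReal.ofReal_pos.mpr hB0).ne'
    apply mul_ne_zero (ENNReal.ofReal_pos.mpr hmt0).ne'
    exact (lt_of_lt_of_le zero_lt_one le_add_self).ne'
  have hMt : M ≠ ⊤ := by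
    rw [hM]
    exact ENNReal.mul_ne_top ENNReal.ofReal_ne_top
      (ENNReal.mul_ne_top ENNReal.ofReal_ne_top
        (ENNReal.add_ne_top.mpr ⟨hIlt.ne, ENNReal.one_ne_top⟩))
  have colBM : ∀ w, ∫⁻ z, G (w, z) ≤ M := by
    intro w
    refine (colB w).le.trans ?_
    rw [hM]
    apply mul_le_mul_right
    calc I = 1 * I := (one_mul I).symm
      _ ≤ ENNReal.ofReal (m ^ t) * (I + 1) :=
        mul_le_mul' (ENNReal.one_le_ofReal.mpr hmt1) le_self_add
  have rowBM : ∀ z, ∫⁻ w, G (w, z) ≤ M := fun z =>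
    (rowB z).trans (mul_le_mul_right (mul_le_mul_right le_self_add _) _)
  refine ⟨B * m ^ t * (I.toReal + 1),
    mul_nonneg (mul_nonneg hB0.le hmt0.le) (by positivity), fun F hF _hfin => ?_⟩
  have hC'M : ENNReal.ofReal (B * m ^ t * (I.toReal + 1)) = M := by
    rw [hM, mul_assoc, ENNReal.ofReal_mul hB0.le, ENNReal.ofReal_mul hmt0.le,
      ENNReal.ofReal_add ENNReal.toReal_nonneg zero_le_one, ENNReal.ofReal_toReal hIlt.ne,
      ENNReal.ofReal_one]
  set g : EuclideanSpace ℝ (Fin (2*d)) → ℝ≥0∞ :=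
    fun w => ENNReal.ofReal (μ (χ w) * ‖F w‖) with hgdef
  have hgae : AEMeasurable g volume := by
    apply ENNReal.measurable_ofReal.comp_aemeasurable
    exact (hμm.comp hχ.continuous.measurable).aemeasurable.mul hF.norm.aemeasurable
  have hgeq : (fun w => (‖μ (χ w) * ‖F w‖‖₊ : ℝ≥0∞)) = g := by
    funext w
    rw [hgdef, ← enorm_eq_nnnorm, Real.enorm_eq_ofReal (mul_nonneg (hμpos _).le (norm_nonneg _))]
  have hpoint : ∀ z, (‖μ z * ‖∫ w, k (w, z) * F w‖‖₊ : ℝ≥0∞) ≤ ∫⁻ w, G (w, z) * g w := by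
    intro z
    have h0 : (0:ℝ) ≤ μ z := (hμpos z).le
    calc (‖μ z * ‖∫ w, k (w, z) * F w‖‖₊ : ℝ≥0∞)
        = ENNReal.ofReal (μ z) * (‖(∫ w, k (w, z) * F w)‖₊ : ℝ≥0∞) := by
          rw [← enorm_eq_nnnorm, Real.enorm_eq_ofReal (mul_nonneg h0 (norm_nonneg _)),
            ENNReal.ofReal_mul h0, ofReal_norm_eq_enorm]
          rfl
      _ ≤ ENNReal.ofReal (μ z) * ∫⁻ w, (‖k (w, z) * F w‖₊ : ℝ≥0∞) :=
          mul_le_mul_right (enorm_integral_le_lintegral_enorm _) _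
      _ = ∫⁻ w, ENNReal.ofReal (μ z) * (‖k (w, z) * F w‖₊ : ℝ≥0∞) :=
          (lintegral_const_mul' _ _ ENNReal.ofReal_ne_top).symm
      _ ≤ ∫⁻ w, G (w, z) * g w := by
          apply lintegral_mono
          intro w
          dsimp only
          have hbj : (0:ℝ) ≤ B * jap (z - χ w) ^ (-t) :=
            mul_nonneg hB0.le (Real.rpow_pos_of_pos (jappos _) _).le
          rw [← enorm_eq_nnnorm, ← ofReal_norm_eq_enorm, ← ENNReal.ofReal_mul h0]
          simp only [hGdef, hgdef]
          rw [← ENNReal.ofReal_mul hbj]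
          apply ENNReal.ofReal_le_ofReal
          rw [norm_mul]
          calc μ z * (‖k (w, z)‖ * ‖F w‖) = (μ z * ‖k (w, z)‖) * ‖F w‖ := by ring
            _ ≤ (B * jap (z - χ w) ^ (-t) * μ (χ w)) * ‖F w‖ :=
                mul_le_mul_of_nonneg_right (key w z) (norm_nonneg _)
            _ = (B * jap (z - χ w) ^ (-t)) * (μ (χ w) * ‖F w‖) := by ring
  calc eLpNorm (fun z => μ z * ‖∫ w, k (w, z) * F w‖) p volume
      = Np p (fun z => (‖μ z * ‖∫ w, k (w, z) * F w‖‖₊ : ℝ≥0∞)) volume :=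
        eLpNorm_eq_Np hp _ _
    _ ≤ Np p (fun z => ∫⁻ w, G (w, z) * g w) volume := Np_mono p hpoint
    _ ≤ M * Np p g volume := schur_bound hGm hgae hM0 hMt rowBM colBM hp
    _ = ENNReal.ofReal (B * m ^ t * (I.toReal + 1)) *
        eLpNorm (fun w => μ (χ w) * ‖F w‖) p volume := by
        rw [hC'M, eLpNorm_eq_Np hp _ volume, hgeq]
end
end
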